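/- Given H₀ = K_x² + K_y² with [K_x, K_y] = i b, κ_D ≠ 0, γ ∈ ℝ, define H_D = σ₀⊗H₀ + 2κ_D U_D + γ b (σ_z⊗I) where U_D = σ_y⊗K_y − σ_x⊗K_x, and set β_D = (γ−1)b/(2κ_D), V_D = U_D + β_D(σ_z⊗I). Then H_D = V_D² + 2κ_D V_D − β_D²·I. -/

import Mathlib

open ContinuousLinearMap

/-- `σ_x ⊗ K` acting on `ℂ² ⊗ H ≅ H ⊕ H`. -/
def sigmaXT {H : Type*} [NormedAddCommGroup H] [NormedSpace ℂ H]
    (K : H →L[ℂ] H) : (H × H) →L[ℂ] (H × H) :=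
  (K.comp (snd ℂ H H)).prod (K.comp (fst ℂ H H))

/-- `σ_y ⊗ K` acting on `ℂ² ⊗ H ≅ H ⊕ H`. -/
def sigmaYT {H : Type*} [NormedAddCommGroup H] [NormedSpace ℂ H]
    (K : H →L[ℂ] H) : (H × H) →L[ℂ] (H × H) :=
  ((-Complex.I) • K.comp (snd ℂ H H)).prod (Complex.I • K.comp (fst ℂ H H))

/-- `σ_z ⊗ I` acting on `ℂ² ⊗ H ≅ H ⊕ H`. -/
def sigmaZT (H : Type*) [NormedAddCommGroup H] [NormedSpace ℂ H] :
    (H × H) →L[ℂ] (H × H) :=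
  (fst ℂ H H).prod (-(snd ℂ H H))

/-- `σ₀ ⊗ K` acting on `ℂ² ⊗ H ≅ H ⊕ H`. -/
def sigma0T {H : Type*} [NormedAddCommGroup H] [NormedSpace ℂ H]
    (K : H →L[ℂ] H) : (H × H) →L[ℂ] (H × H) :=
  K.prodMap K

/-- The Dresselhaus Hamiltonian `H_D = σ₀⊗H₀ + 2κ_D U_D + γ b (σ_z⊗I)` satisfies
`H_D = V_D² + 2κ_D V_D − β_D²` with `β_D = (γ−1)b/(2κ_D)`, `V_D = U_D + β_D (σ_z⊗I)`. -/
theorem dresselhaus_hamiltonian_susy_form {H : Type*} [NormedAddCommGroup H]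
    [InnerProductSpace ℂ H] [CompleteSpace H] (Kx Ky : H →L[ℂ] H)
    (hKx : IsSelfAdjoint Kx) (hKy : IsSelfAdjoint Ky) (b γ κD : ℝ) (hκ : κD ≠ 0)
    (hcomm : Kx.comp Ky - Ky.comp Kx = (Complex.I * b) • ContinuousLinearMap.id ℂ H)
    (βD : ℝ) (hβ : βD = (γ - 1) * b / (2 * κD))
    (U V HD : (H × H) →L[ℂ] (H × H)) (hU : U = sigmaYT Ky - sigmaXT Kx)
    (hV : V = U + (βD : ℂ) • sigmaZT H)
    (hHD : HD = sigma0T (Kx.comp Kx + Ky.comp Ky) + (2 * (κD : ℂ)) • U +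
        ((γ : ℂ) * b) • sigmaZT H) :
    HD = V.comp V + (2 * (κD : ℂ)) • V -
      ((βD : ℂ) ^ 2) • ContinuousLinearMap.id ℂ (H × H) := by
  have hc : ∀ w : H, Kx (Ky w) = Ky (Kx w) + (Complex.I * b) • w := by
    intro w
    have := congrFun (congrArg DFunLike.coe hcomm) w
    simp only [ContinuousLinearMap.sub_apply, ContinuousLinearMap.comp_apply,
      ContinuousLinearMap.smul_apply, ContinuousLinearMap.id_apply] at this
    linear_combination (norm := abel) this
  have hγb : ((γ:ℂ)) * b = 2 * (κD:ℂ) * (βD:ℂ) + b := by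
    have h1 : (2 * κD) * βD = (γ - 1) * b := by
      rw [hβ]; field_simp
    have h2 : ((2 * κD : ℝ) : ℂ) * βD = (((γ - 1) * b : ℝ) : ℂ) := by exact_mod_cast h1
    push_cast at h2
    linear_combination -h2
  subst hU hV hHD
  rw [show ((γ:ℂ) * b) • sigmaZT H = (2 * (κD:ℂ) * βD + b) • sigmaZT H from by rw [hγb]]
  ext v <;>
  · simp only [ContinuousLinearMap.add_apply, ContinuousLinearMap.sub_apply,
      ContinuousLinearMap.comp_apply, ContinuousLinearMap.smul_apply,
      ContinuousLinearMap.id_apply, ContinuousLinearMap.neg_apply,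
      sigmaXT, sigmaYT, sigmaZT, sigma0T, ContinuousLinearMap.prod_apply,
      ContinuousLinearMap.coe_prodMap', Prod.map_apply, ContinuousLinearMap.coe_fst',
      ContinuousLinearMap.coe_snd', ContinuousLinearMap.inl_apply,
      ContinuousLinearMap.inr_apply, Prod.fst_add, Prod.snd_add, Prod.smul_fst,
      Prod.smul_snd, Prod.fst_sub, Prod.snd_sub, Prod.fst_neg, Prod.snd_neg,
      map_add, map_sub, map_smul, map_neg, map_zero, smul_zero,
      smul_add, smul_sub, smul_neg, smul_smul, hc]
    match_scalars <;> ring_nf <;> simp [Complex.I_sq] <;> ring_nf
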